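/- arXiv:math/0411451 — 6 statements merged into one kernel-verified Lean document; each statement's English description precedes it below -/
import Mathlib

section
/- If n is even, then in ℤ[a_{ij} : 1 ≤ i ≤ j ≤ n], the determinant of the symmetric n×n matrix with diagonal entries 2a_{ii} and off-diagonal entries a_{ij} is congruent modulo 4 to the determinant of the symmetric matrix with zero diagonal and the same off-diagonal entries a_{ij}. -/
/-!
Write `A = B + D` with `B` symmetric with zero diagonal and `D` diagonal with entries in `2R`,
and work modulo `4`. In the Leibniz expansion, the terms of `σ` and `σ⁻¹` agree by symmetry,
and the `A`- and `B`-terms of `σ` differ by a multiple of `2`, so the contributions of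
`σ ≠ σ⁻¹` to `det A - det B` cancel in pairs. For an involution `σ`, the number of fixed
points has the parity of `n`, hence is `0` (the `A`- and `B`-terms coincide) or at least `2`
(both terms vanish, the `A`-term being divisible by `4`).
-/

open Matrix Equiv Finset

namespace Matrix

variable {ι R : Type*} [Fintype ι] [CommRing R]

lemma prod_apply_perm_inv_eq_of_isSymm {M : Matrix ι ι R} (hM : M.IsSymm) (σ : Perm ι) :
    ∏ i, M (σ⁻¹ i) i = ∏ i, M (σ i) i := by
  rw [← Equiv.prod_comp σ]
  exact prod_congr rfl fun i _ => by simp [hM.apply]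

section

variable {B : Matrix ι ι R} {σ : Perm ι}

lemma prod_apply_perm_eq_zero_of_apply_eq (hB : ∀ i, B i i = 0) {i : ι} (hi : σ i = i) :
    ∏ j, B (σ j) j = 0 :=
  prod_eq_zero (mem_univ i) (by rw [hi, hB])

variable [DecidableEq ι] {d : ι → R}

lemma prod_add_diagonal_apply_perm_eq_of_forall_ne (hσ : ∀ i, σ i ≠ i) :
    ∏ i, (B + diagonal d) (σ i) i = ∏ i, B (σ i) i :=
  prod_congr rfl fun i _ => by simp [hσ i]

lemma two_pow_card_dvd_prod_add_diagonal_two_mul (hB : ∀ i, B i i = 0) {s : Finset ι}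
    (hs : ∀ i ∈ s, σ i = i) :
    2 ^ #s ∣ ∏ i, (B + diagonal fun i => 2 * d i) (σ i) i := by
  have hfixed : ∏ i ∈ s, (B + diagonal fun i => 2 * d i) (σ i) i = 2 ^ #s * ∏ i ∈ s, d i := by
    rw [← prod_const, ← prod_mul_distrib]
    exact prod_congr rfl fun i hi => by simp [hs i hi, hB]
  have hsub := prod_dvd_prod_of_subset s univ (fun i => (B + diagonal fun i => 2 * d i) (σ i) i)
    (subset_univ s)
  rw [hfixed] at hsub
  exact (dvd_mul_right _ _).trans hsub

variable (h4 : (4 : R) = 0) (hB : ∀ i, B i i = 0)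
include h4 hB

lemma two_mul_prod_add_diagonal_two_mul_sub_prod_eq_zero (σ : Perm ι) :
    2 * (∏ i, (B + diagonal fun i => 2 * d i) (σ i) i - ∏ i, B (σ i) i) = 0 := by
  by_cases hfix : ∃ i, σ i = i
  · obtain ⟨i, hi⟩ := hfix
    obtain ⟨c, hc⟩ := two_pow_card_dvd_prod_add_diagonal_two_mul (σ := σ) (d := d) hB
      (s := {i}) (by simpa using hi)
    rw [prod_apply_perm_eq_zero_of_apply_eq hB hi, hc, card_singleton]
    linear_combination c * h4
  · rw [not_exists] at hfix
    rw [prod_add_diagonal_apply_perm_eq_of_forall_ne hfix, sub_self, mul_zero]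

lemma prod_add_diagonal_two_mul_eq_prod_of_inv_eq (hι : Even (Fintype.card ι))
    (hσ : σ⁻¹ = σ) :
    ∏ i, (B + diagonal fun i => 2 * d i) (σ i) i = ∏ i, B (σ i) i := by
  by_cases hfix : ∃ i, σ i = i
  · obtain ⟨i, hi⟩ := hfix
    have hσ2 : σ ^ 2 ^ 1 = 1 := by rw [pow_one, sq, ← inv_eq_iff_mul_eq_one, hσ]
    obtain ⟨j, hj, hji⟩ :=
      Perm.exists_fixed_point_of_prime' (p := 2) (even_iff_two_dvd.mp hι) hσ2 hi
    obtain ⟨c, hc⟩ := two_pow_card_dvd_prod_add_diagonal_two_mul (σ := σ) (d := d) hB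
      (s := {i, j}) (by simp [hi, hj])
    rw [prod_apply_perm_eq_zero_of_apply_eq hB hi, hc, card_pair hji.symm]
    linear_combination c * h4
  · rw [not_exists] at hfix
    exact prod_add_diagonal_apply_perm_eq_of_forall_ne hfix

theorem det_add_diagonal_two_mul_of_four_eq_zero (hι : Even (Fintype.card ι)) (hBs : B.IsSymm)
    (d : ι → R) : (B + diagonal fun i => 2 * d i).det = B.det := by
  have hAs : (B + diagonal fun i => 2 * d i).IsSymm := hBs.add (isSymm_diagonal _)
  rw [← sub_eq_zero, det_apply, det_apply, ← sum_sub_distrib]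
  refine sum_involution (fun σ _ => σ⁻¹) (fun σ _ => ?_) (fun σ _ hσ hinv => hσ ?_)
    (fun σ _ => mem_univ _) (fun σ _ => inv_inv σ)
  · rw [Perm.sign_inv, prod_apply_perm_inv_eq_of_isSymm hAs,
      prod_apply_perm_inv_eq_of_isSymm hBs, ← smul_sub, ← smul_add, ← two_mul,
      two_mul_prod_add_diagonal_two_mul_sub_prod_eq_zero h4 hB, smul_zero]
  · rw [← smul_sub, prod_add_diagonal_two_mul_eq_prod_of_inv_eq h4 hB hι hinv, sub_self,
      smul_zero]

end

theorem four_dvd_det_add_diagonal_two_mul_sub_det [DecidableEq ι] (hι : Even (Fintype.card ι))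
    {B : Matrix ι ι R} (hBs : B.IsSymm) (hB : ∀ i, B i i = 0) (d : ι → R) :
    4 ∣ (B + diagonal fun i => 2 * d i).det - B.det := by
  let f := Ideal.Quotient.mk (Ideal.span {(4 : R)})
  have h4 : (4 : R ⧸ Ideal.span {(4 : R)}) = 0 := by
    rw [← map_ofNat f 4]
    exact (Ideal.Quotient.eq_zero_iff_dvd 4 4).mpr dvd_rfl
  rw [← Ideal.Quotient.eq_zero_iff_dvd, map_sub, f.map_det, f.map_det, map_add,
    RingHom.mapMatrix_apply, RingHom.mapMatrix_apply, diagonal_map (map_zero f), sub_eq_zero]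
  simp only [map_mul, map_ofNat]
  exact det_add_diagonal_two_mul_of_four_eq_zero h4 (by simp [hB]) hι (hBs.map f) _

end Matrix

/-- If `n` is even, then in `ℤ[a_{ij} : 1 ≤ i ≤ j ≤ n]` the determinant of the symmetric
matrix with diagonal `2 a_{ii}` and off-diagonal entries `a_{ij}` is congruent modulo `4`
to the determinant of the symmetric matrix with zero diagonal and the same off-diagonal
entries. -/
theorem stmt1 (n : ℕ) (hn : Even n) :
    ∃ g : MvPolynomial (Fin n × Fin n) ℤ,
      (Matrix.of fun i j : Fin n =>
          if i = j then 2 * MvPolynomial.X (i, i)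
          else if i < j then MvPolynomial.X (i, j) else MvPolynomial.X (j, i)).det
      - (Matrix.of fun i j : Fin n =>
          if i = j then 0
          else if i < j then MvPolynomial.X (i, j) else MvPolynomial.X (j, i)).det
      = 4 * g := by
  set B : Matrix (Fin n) (Fin n) (MvPolynomial (Fin n × Fin n) ℤ) := Matrix.of fun i j =>
    if i = j then 0 else if i < j then MvPolynomial.X (i, j) else MvPolynomial.X (j, i)
  have hA : (Matrix.of fun i j : Fin n =>
      if i = j then 2 * MvPolynomial.X (i, i)
      else if i < j then MvPolynomial.X (i, j) else MvPolynomial.X (j, i)) =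
      B + diagonal fun i => 2 * MvPolynomial.X (i, i) := by
    ext i j
    by_cases h : i = j <;> simp [B, h]
  have hBs : B.IsSymm := by
    refine IsSymm.ext fun i j => ?_
    rcases lt_trichotomy i j with h | rfl | h
    · simp [B, h, h.ne, h.ne', h.not_gt]
    · rfl
    · simp [B, h, h.ne, h.ne', h.not_gt]
  rw [hA]
  exact four_dvd_det_add_diagonal_two_mul_sub_det (by simpa using hn) hBs (by simp [B]) _
end

section
/- If n = 2ν is even, then in ℤ[a_{ij} : 1 ≤ i < j ≤ n], the determinant of the alternating matrix with entries a_{ij} above the diagonal and -a_{ij} below is congruent modulo 4 to (-1)^ν times the determinant of the symmetric matrix with zero diagonal and entries a_{ij} off the diagonal. -/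
/-!
Expand both determinants over permutations. Since `A (σ i) i = ± B (σ i) i` with the sign `-1`
exactly when `i ≤ σ i`, the `σ`-term of `det A - (-1)^ν det B` is
`sign σ * ((-1)^w(σ) - (-1)^ν) * ∏ B (σ i) i` with `w(σ) = #{i | i ≤ σ i}`. It vanishes when `σ`
has a fixed point; otherwise `w(σ) + w(σ⁻¹) = 2ν`, so the terms of `σ` and `σ⁻¹` are equal (`B` is
symmetric) and add up to twice `±1 - (-1)^ν`, a multiple of `4`, while for an involution
`w(σ) = ν` and the term itself is `0`.
-/

open Finset Equiv

lemma Equiv.Perm.card_le_inv_apply_add_card_le_apply {ι : Type*} [Fintype ι] [LinearOrder ι]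
    {σ : Perm ι} (hσ : ∀ i, σ i ≠ i) :
    #{i | i ≤ σ⁻¹ i} + #{i | i ≤ σ i} = Fintype.card ι := by
  have hinv : ({i | i ≤ σ⁻¹ i} : Finset ι) = ({j | ¬ j ≤ σ j} : Finset ι).map σ.toEmbedding := by
    ext i
    have hi := hσ (σ.symm i)
    rw [apply_symm_apply] at hi
    simpa [Perm.inv_def] using hi.le_iff_lt
  rw [hinv, card_map, add_comm, card_filter_add_card_filter_not, card_univ]

lemma two_mul_neg_one_pow_sub_neg_one_pow {R : Type*} [CommRing R] (h4 : (4 : R) = 0) (a b : ℕ) :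
    2 * ((-1 : R) ^ a - (-1) ^ b) = 0 := by
  rcases neg_one_pow_eq_or R a with ha | ha <;> rcases neg_one_pow_eq_or R b with hb | hb <;>
    rw [ha, hb]
  · ring
  · linear_combination h4
  · linear_combination -h4
  · ring

namespace Matrix

variable {ι R : Type*} [Fintype ι] [CommRing R]

lemma prod_perm_eq_zero_of_apply_eq {B : Matrix ι ι R} (hdiag : ∀ i, B i i = 0)
    {σ : Perm ι} {i : ι} (hi : σ i = i) : ∏ j, B (σ j) j = 0 :=
  prod_eq_zero (mem_univ i) (by rw [hi, hdiag])

lemma IsSymm.prod_perm_inv {B : Matrix ι ι R} (hB : B.IsSymm) (σ : Perm ι) :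
    ∏ i, B (σ⁻¹ i) i = ∏ i, B (σ i) i := by
  rw [← Equiv.prod_comp σ]
  simp [hB.apply]

variable [LinearOrder ι]

/-- For symmetric `B` with zero diagonal, this is the alternating matrix agreeing with `B` above
the diagonal. -/
def negBelowDiag (B : Matrix ι ι R) : Matrix ι ι R :=
  of fun i j => if i < j then B i j else -B i j

lemma prod_negBelowDiag_perm (B : Matrix ι ι R) (σ : Perm ι) :
    ∏ i, negBelowDiag B (σ i) i = (-1) ^ #{i | i ≤ σ i} * ∏ i, B (σ i) i := by
  have hsign : ∀ i, negBelowDiag B (σ i) i = (if i ≤ σ i then -1 else 1) * B (σ i) i := by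
    intro i
    by_cases h : σ i < i
    · simp [negBelowDiag, h, not_le.mpr h]
    · simp [negBelowDiag, h, not_lt.mp h]
  simp only [hsign, prod_mul_distrib, prod_ite, prod_const_one, mul_one, prod_const]

theorem det_negBelowDiag_of_four_eq_zero (h4 : (4 : R) = 0) {B : Matrix ι ι R} (hB : B.IsSymm)
    (hdiag : ∀ i, B i i = 0) {ν : ℕ} (hcard : Fintype.card ι = 2 * ν) :
    (negBelowDiag B).det = (-1) ^ ν * B.det := by
  let w (σ : Perm ι) : ℕ := #{i | i ≤ σ i}
  let P (σ : Perm ι) : R := ∏ i, B (σ i) i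
  let term (σ : Perm ι) : R := (Perm.sign σ : R) * (((-1) ^ w σ - (-1) ^ ν) * P σ)
  have hw : ∀ σ : Perm ι, (∀ i, σ i ≠ i) → w σ⁻¹ + w σ = 2 * ν := fun σ hσ =>
    hcard ▸ Perm.card_le_inv_apply_add_card_le_apply hσ
  suffices ∑ σ, term σ = 0 by
    rw [← sub_eq_zero, det_apply, det_apply, mul_sum, ← sum_sub_distrib, ← this]
    refine sum_congr rfl fun σ _ => ?_
    simp only [term, w, P, Units.smul_def, zsmul_eq_mul, prod_negBelowDiag_perm]
    ring
  refine sum_ninvolution (fun σ => σ⁻¹) (fun σ => ?_) (fun σ hσ hinv => hσ ?_)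
    (fun _ => mem_univ _) inv_inv
  · have hP : P σ⁻¹ = P σ := hB.prod_perm_inv σ
    by_cases hfix : ∀ i, σ i ≠ i
    · have hpar : (-1 : R) ^ w σ⁻¹ = (-1) ^ w σ := by
        rw [neg_one_pow_eq_pow_mod_two, neg_one_pow_eq_pow_mod_two (w σ)]
        have := hw σ hfix
        congr 1
        omega
      simp only [term, hP, hpar, Perm.sign_inv]
      linear_combination (Perm.sign σ : R) * P σ * two_mul_neg_one_pow_sub_neg_one_pow h4 (w σ) ν
    · obtain ⟨i, hi⟩ := not_forall_not.mp hfix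
      have h0 : P σ = 0 := prod_perm_eq_zero_of_apply_eq hdiag hi
      simp only [term, hP, h0, mul_zero, add_zero]
  · by_cases hfix : ∀ i, σ i ≠ i
    · have hν : w σ = ν := by
        have := hw σ hfix
        simp only [hinv] at this
        omega
      simp only [term, hν, sub_self, zero_mul, mul_zero]
    · obtain ⟨i, hi⟩ := not_forall_not.mp hfix
      have h0 : P σ = 0 := prod_perm_eq_zero_of_apply_eq hdiag hi
      simp only [term, h0, mul_zero]

theorem four_dvd_det_negBelowDiag_sub {B : Matrix ι ι R} (hB : B.IsSymm)
    (hdiag : ∀ i, B i i = 0) {ν : ℕ} (hcard : Fintype.card ι = 2 * ν) :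
    4 ∣ (negBelowDiag B).det - (-1) ^ ν * B.det := by
  let π := Ideal.Quotient.mk (Ideal.span {(4 : R)})
  have h4 : (4 : R ⧸ Ideal.span {(4 : R)}) = 0 := by
    rw [← map_ofNat π 4, Ideal.Quotient.eq_zero_iff_dvd]
  have hmap : π.mapMatrix (negBelowDiag B) = negBelowDiag (π.mapMatrix B) := by
    ext i j
    simp only [negBelowDiag, RingHom.mapMatrix_apply, map_apply, of_apply, apply_ite π, map_neg]
  rw [← Ideal.Quotient.eq_zero_iff_dvd, map_sub, map_mul, map_pow,
    map_neg, map_one, RingHom.map_det, RingHom.map_det, hmap, sub_eq_zero]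
  exact det_negBelowDiag_of_four_eq_zero h4 (hB.map π) (fun i => by simp [hdiag]) hcard

end Matrix

/-- If `n = 2ν` is even, then in `ℤ[a_{ij} : 1 ≤ i < j ≤ n]` the determinant of the generic
alternating matrix (entries `a_{ij}` above, `-a_{ij}` below the diagonal) is congruent
modulo `4` to `(-1)^ν` times the determinant of the symmetric matrix with zero diagonal and
off-diagonal entries `a_{ij}`. -/
theorem stmt2 (ν : ℕ) :
    ∃ g : MvPolynomial (Fin (2 * ν) × Fin (2 * ν)) ℤ,
      (Matrix.of fun i j : Fin (2 * ν) =>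
          if i < j then MvPolynomial.X (i, j)
          else if j < i then -MvPolynomial.X (j, i) else 0).det
      - (-1) ^ ν *
        (Matrix.of fun i j : Fin (2 * ν) =>
          if i < j then MvPolynomial.X (i, j)
          else if j < i then MvPolynomial.X (j, i) else 0).det
      = 4 * g := by
  set B : Matrix (Fin (2 * ν)) (Fin (2 * ν)) (MvPolynomial (Fin (2 * ν) × Fin (2 * ν)) ℤ) :=
    Matrix.of fun i j => if i < j then MvPolynomial.X (i, j)
      else if j < i then MvPolynomial.X (j, i) else 0
  have hB : B.IsSymm := by
    ext i j
    simp only [B, Matrix.transpose_apply, Matrix.of_apply]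
    split_ifs <;> first | rfl | omega
  have hA : (Matrix.of fun i j : Fin (2 * ν) =>
      if i < j then MvPolynomial.X (i, j) else if j < i then -MvPolynomial.X (j, i) else 0) =
      B.negBelowDiag := by
    ext i j
    simp only [B, Matrix.negBelowDiag, Matrix.of_apply]
    split_ifs <;> rfl
  rw [hA]
  exact Matrix.four_dvd_det_negBelowDiag_sub hB (by simp [B]) (Fintype.card_fin _)
end

section
/- Over a commutative ring where det of an alternating matrix equals the square of its Pfaffian: for an even-sized alternating matrix A with entries in a ring of characteristic 0, det(A)·det(B) = det(D)² where A, B, D share the same lower-right alternating block C and have first rows/columns built from vectors a and b as in Lemma 2.4. -/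
open Matrix

/-- The bordered matrix with first row `(0, x)`, first column `(0, -y)ᵗ` and lower-right
block `C`. -/
def border {R : Type*} [CommRing R] {m : ℕ} (x y : Fin m → R)
    (C : Matrix (Fin m) (Fin m) R) : Matrix (Fin (m + 1)) (Fin (m + 1)) R :=
  Matrix.of fun i j =>
    Fin.cases (Fin.cases (0 : R) (fun j' => x j') j)
      (fun i' => Fin.cases (-(y i')) (fun j' => C i' j') j) i

/-!
Put `a` and `b` together into `M = [[0, 0, a], [0, 0, b], [-ᵗa, -ᵗb, C]]`. It is alternating of
odd size, so `det M = 0`, and the Desnanot–Jacobi identity for its first two rows and columns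
reads `det B · det A - det (border b a C) · det D = det M · det C = 0`. Finally
`border b a C = -Dᵀ` has the same determinant as `D` because `m + 1` is even.

Desnanot–Jacobi is Jacobi's identity for the `2 × 2` corner minor of the adjugate. Multiplying
`M` by the matrix whose first block column is that of `adj M` (and the identity elsewhere) gives a
block triangular matrix, whence `det M · det (adj M)₁₁ = (det M)² · det M₂₂`; the factor `det M`
cancels for the generic matrix over `ℤ`, and the identity then specializes to any matrix.
-/

namespace Matrix

variable {R : Type*} [CommRing R]

section Jacobi

variable {m n : Type*} [Fintype m] [Fintype n] [DecidableEq m] [DecidableEq n]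

theorem det_mul_det_toBlocks₁₁_adjugate (M : Matrix (m ⊕ n) (m ⊕ n) R) :
    M.det * (adjugate M).toBlocks₁₁.det = M.det ^ Fintype.card m * M.toBlocks₂₂.det := by
  set A := adjugate M
  set N : Matrix (m ⊕ n) (m ⊕ n) R := fromBlocks A.toBlocks₁₁ 0 A.toBlocks₂₁ 1
  have hN : N.det = A.toBlocks₁₁.det := by
    rw [det_fromBlocks_zero₁₂, det_one, mul_one]
  have hMN : M * N = fromBlocks (M.det • 1) M.toBlocks₁₂ 0 M.toBlocks₂₂ := by
    have h : M * A = M.det • 1 := mul_adjugate M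
    conv_lhs at h => rw [← fromBlocks_toBlocks M, ← fromBlocks_toBlocks A, fromBlocks_multiply]
    rw [← fromBlocks_one, fromBlocks_smul, smul_zero] at h
    obtain ⟨h₁₁, -, h₂₁, -⟩ := fromBlocks_inj.mp h
    conv_lhs => rw [← fromBlocks_toBlocks M, fromBlocks_multiply, h₁₁, h₂₁]
    simp
  rw [← hN, ← det_mul, hMN, det_fromBlocks_zero₂₁, det_smul, det_one, mul_one]

theorem det_toBlocks₁₁_adjugate [Nonempty m] (M : Matrix (m ⊕ n) (m ⊕ n) R) :
    (adjugate M).toBlocks₁₁.det = M.det ^ (Fintype.card m - 1) * M.toBlocks₂₂.det := by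
  let X := mvPolynomialX (m ⊕ n) (m ⊕ n) ℤ
  have hX : (adjugate X).toBlocks₁₁.det = X.det ^ (Fintype.card m - 1) * X.toBlocks₂₂.det := by
    refine mul_left_cancel₀ (det_mvPolynomialX_ne_zero _ ℤ) ?_
    rw [det_mul_det_toBlocks₁₁_adjugate, ← mul_assoc, ← pow_succ',
      Nat.sub_add_cancel Fintype.card_pos]
  let f := MvPolynomial.eval₂Hom (Int.castRingHom R) fun p : (m ⊕ n) × (m ⊕ n) => M p.1 p.2
  have hfX : f.mapMatrix X = M := mvPolynomialX_map_eval₂ _ M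
  have := congrArg f hX
  simp only [RingHom.map_det, map_mul, map_pow] at this
  rw [← hfX, ← RingHom.map_adjugate]
  exact this

end Jacobi

theorem desnanot_jacobi {n : ℕ} (M : Matrix (Fin (n + 2)) (Fin (n + 2)) R) :
    (M.submatrix Fin.succ Fin.succ).det * (M.submatrix (Fin.succAbove 1) (Fin.succAbove 1)).det -
      (M.submatrix Fin.succ (Fin.succAbove 1)).det * (M.submatrix (Fin.succAbove 1) Fin.succ).det =
    M.det * (M.submatrix (Fin.succ ∘ Fin.succ) (Fin.succ ∘ Fin.succ)).det := by
  let e : Fin 2 ⊕ Fin n ≃ Fin (n + 2) := finSumFinEquiv.trans (finCongr (add_comm 2 n))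
  have he₀ : e (.inl 0) = 0 := rfl
  have he₁ : e (.inl 1) = 1 := rfl
  have he : e ∘ Sum.inr = Fin.succ ∘ Fin.succ := by
    ext j; simp [e]
  have h₂₂ : (M.submatrix e e).toBlocks₂₂ =
      M.submatrix (Fin.succ ∘ Fin.succ) (Fin.succ ∘ Fin.succ) := by
    rw [← he]; rfl
  have h := det_toBlocks₁₁_adjugate (M.submatrix e e)
  rw [adjugate_submatrix_equiv_self, det_submatrix_equiv_self, h₂₂, det_fin_two] at h
  simp only [toBlocks₁₁, of_apply, submatrix_apply, he₀, he₁,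
    adjugate_fin_succ_eq_det_submatrix, Fin.succAbove_zero, Fin.val_zero, Fin.val_one,
    Fintype.card_fin] at h
  norm_num at h
  linear_combination h

theorem det_eq_zero_of_transpose_eq_neg [NoZeroDivisors R] [CharZero R] {ι : Type*} [Fintype ι]
    [DecidableEq ι] {M : Matrix ι ι R} (hι : Odd (Fintype.card ι)) (hM : Mᵀ = -M) : M.det = 0 := by
  have h := congrArg det hM
  rw [det_transpose, det_neg, hι.neg_one_pow, neg_one_mul] at h
  exact CharZero.eq_neg_self_iff.mp h

end Matrix

section Border

variable {R : Type*} [CommRing R] {m : ℕ} (x y : Fin m → R) (C : Matrix (Fin m) (Fin m) R)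

@[simp] lemma border_zero_zero : border x y C 0 0 = 0 := rfl

@[simp] lemma border_zero_succ (j : Fin m) : border x y C 0 j.succ = x j := rfl

@[simp] lemma border_succ_zero (i : Fin m) : border x y C i.succ 0 = -y i := rfl

@[simp] lemma border_succ_succ (i j : Fin m) : border x y C i.succ j.succ = C i j := rfl

lemma border_transpose : (border x y C)ᵀ = border (-y) (-x) Cᵀ := by
  ext i j
  cases i using Fin.cases <;> cases j using Fin.cases <;> simp

lemma border_neg : border (-x) (-y) (-C) = -border x y C := by
  ext i j
  cases i using Fin.cases <;> cases j using Fin.cases <;> simp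

variable {x y C}

lemma border_transpose_eq_neg (hC : Cᵀ = -C) : (border x x C)ᵀ = -border x x C := by
  rw [border_transpose, hC, border_neg]

lemma det_border_comm (hC : Cᵀ = -C) (hm : Even (m + 1)) :
    (border y x C).det = (border x y C).det := by
  rw [← neg_neg (border y x C), ← border_neg, ← hC, ← border_transpose, det_neg, det_transpose,
    Fintype.card_fin, hm.neg_one_pow, one_mul]

variable (x y C)

/-- `[[0, 0, x], [0, 0, y], [-ᵗx, -ᵗy, C]]` -/
def doubleBorder : Matrix (Fin (m + 2)) (Fin (m + 2)) R :=
  border (Fin.cons 0 x) (Fin.cons 0 x) (border y y C)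

lemma doubleBorder_submatrix_succ_succ :
    (doubleBorder x y C).submatrix Fin.succ Fin.succ = border y y C := rfl

lemma doubleBorder_submatrix_succAbove_one_succAbove_one :
    (doubleBorder x y C).submatrix (Fin.succAbove 1) (Fin.succAbove 1) = border x x C := by
  ext i j
  cases i using Fin.cases <;> cases j using Fin.cases <;>
    simp [doubleBorder, -Fin.succ_zero_eq_one, -Fin.succ_zero_eq_one']

lemma doubleBorder_submatrix_succ_succAbove_one :
    (doubleBorder x y C).submatrix Fin.succ (Fin.succAbove 1) = border y x C := by
  ext i j
  cases i using Fin.cases <;> cases j using Fin.cases <;>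
    simp [doubleBorder, -Fin.succ_zero_eq_one, -Fin.succ_zero_eq_one']

lemma doubleBorder_submatrix_succAbove_one_succ :
    (doubleBorder x y C).submatrix (Fin.succAbove 1) Fin.succ = border x y C := by
  ext i j
  cases i using Fin.cases <;> cases j using Fin.cases <;>
    simp [doubleBorder, -Fin.succ_zero_eq_one, -Fin.succ_zero_eq_one']

lemma doubleBorder_submatrix_succ_succ_succ_succ :
    (doubleBorder x y C).submatrix (Fin.succ ∘ Fin.succ) (Fin.succ ∘ Fin.succ) = C := rfl

end Border

theorem det_border_mul_det_border {R : Type*} [CommRing R] [NoZeroDivisors R] [CharZero R]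
    {m : ℕ} (hm : Even (m + 1)) (x y : Fin m → R) {C : Matrix (Fin m) (Fin m) R} (hC : Cᵀ = -C) :
    (border x x C).det * (border y y C).det = (border x y C).det ^ 2 := by
  have hodd : Odd (Fintype.card (Fin (m + 2))) := by
    rw [Fintype.card_fin]; exact hm.add_one
  have hdet : (doubleBorder x y C).det = 0 :=
    det_eq_zero_of_transpose_eq_neg hodd (border_transpose_eq_neg (border_transpose_eq_neg hC))
  have h := desnanot_jacobi (doubleBorder x y C)
  rw [doubleBorder_submatrix_succ_succ, doubleBorder_submatrix_succAbove_one_succAbove_one,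
    doubleBorder_submatrix_succ_succAbove_one, doubleBorder_submatrix_succAbove_one_succ,
    hdet, zero_mul, det_border_comm (x := x) (y := y) hC hm] at h
  linear_combination h

/-- Let `n = m + 1 ≥ 2` be even and work with generic indeterminates over `ℚ`: `C` the
generic alternating `m × m` matrix, and generic vectors `a`, `b`.  With
`A = [[0, a], [-ᵗa, C]]`, `B = [[0, b], [-ᵗb, C]]`, `D = [[0, a], [-ᵗb, C]]`, we have
`det A * det B = (det D)^2` (hence the same identity holds over
`ℚ(a_{1j}, b_{1j}, c_{ij})`). -/
theorem stmt4 (m : ℕ) (hm : Even (m + 1)) :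
    (border (fun i => MvPolynomial.X (Sum.inl (Sum.inl i)))
        (fun i => MvPolynomial.X (Sum.inl (Sum.inl i)))
        (Matrix.of fun i j : Fin m =>
          if i < j then MvPolynomial.X (Sum.inr (i, j))
          else if j < i then -MvPolynomial.X (Sum.inr (j, i)) else 0)).det *
      (border (fun i => MvPolynomial.X (Sum.inl (Sum.inr i)))
        (fun i => MvPolynomial.X (Sum.inl (Sum.inr i)))
        (Matrix.of fun i j : Fin m =>
          if i < j then MvPolynomial.X (Sum.inr (i, j))
          else if j < i then -MvPolynomial.X (Sum.inr (j, i)) else 0)).det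
    = ((border (fun i => MvPolynomial.X (Sum.inl (Sum.inl i)))
        (fun i => (MvPolynomial.X (Sum.inl (Sum.inr i)) :
          MvPolynomial ((Fin m ⊕ Fin m) ⊕ Fin m × Fin m) ℚ))
        (Matrix.of fun i j : Fin m =>
          if i < j then MvPolynomial.X (Sum.inr (i, j))
          else if j < i then -MvPolynomial.X (Sum.inr (j, i)) else 0)).det) ^ 2 := by
  refine det_border_mul_det_border hm _ _ ?_
  ext i j
  rcases lt_trichotomy i j with h | rfl | h
  · simp [h, h.not_gt]
  · simp
  · simp [h, h.not_gt]
end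

section
/- Let f_{ij} ∈ F_q[X_1,...,X_n] for 1 ≤ i ≤ j ≤ m, where F_q has characteristic two. Then the determinant of the symmetric m×m matrix with diagonal entries f_{ii}² and off-diagonal entries f_{ij} is a square in F_q[f_{ij} : 1 ≤ i ≤ j ≤ m]; that is, there exists f in the subring generated by the f_{ij} with det = f². -/
/-!
In characteristic two the determinant of a matrix is its permanent. For a symmetric matrix the
terms of `σ` and `σ⁻¹` coincide, so only involutions survive. The term of an involution is the
product of the diagonal entries at its fixed points times the square of the product over its
transpositions; when the diagonal entries are squares, every surviving term is therefore a square,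
and in characteristic two a sum of squares is the square of the sum.
-/

open Equiv Finset Matrix

namespace Matrix

section CommMonoid

variable {n R : Type*} [Fintype n] [CommMonoid R] {M : Matrix n n R}

theorem IsSymm.prod_perm_inv_eq (hM : M.IsSymm) (σ : Perm n) :
    ∏ i, M (σ⁻¹ i) i = ∏ i, M (σ i) i :=
  calc ∏ i, M (σ⁻¹ i) i = ∏ i, M (σ⁻¹ (σ i)) (σ i) := (Equiv.prod_comp σ _).symm
    _ = ∏ i, M (σ i) i := prod_congr rfl fun i _ => by rw [Perm.inv_eq_iff_eq.mpr rfl, hM.apply]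

theorem IsSymm.prod_involution_eq [LinearOrder n] (hM : M.IsSymm) {σ : Perm n} (hσ : σ⁻¹ = σ) :
    ∏ i, M (σ i) i =
      (∏ i ∈ univ.filter (fun i => σ i = i), M i i) *
        (∏ i ∈ univ.filter (fun i => i < σ i), M i (σ i)) ^ 2 := by
  have hσσ : ∀ i, σ (σ i) = i := fun i =>
    calc σ (σ i) = σ⁻¹ (σ i) := by rw [hσ]
      _ = i := by simp
  set b : n → R := fun i => if i < σ i then M i (σ i) else 1
  have hsplit : ∀ i, M (σ i) i = (if σ i = i then M i i else 1) * (b i * b (σ i)) := fun i => by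
    rcases lt_trichotomy i (σ i) with h | h | h
    · simp [b, h, h.ne', hσσ i, not_lt_of_gt h, hM.apply]
    · simp [b, ← h]
    · simp [b, h, h.ne, not_lt_of_gt h, hσσ i]
  rw [prod_congr rfl fun i _ => hsplit i, prod_mul_distrib, prod_mul_distrib,
    Equiv.prod_comp σ b, ← sq, prod_filter, prod_filter]

end CommMonoid

theorem isSymm_of_ite_lt {n α : Type*} [LinearOrder n] (d : n → α) (f : n → n → α) :
    (of fun i j => if i = j then d i else if i < j then f i j else f j i).IsSymm :=
  IsSymm.ext fun i j => by
    rcases lt_trichotomy i j with h | rfl | h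
    · simp [h, h.ne, h.ne', not_lt_of_gt h]
    · rfl
    · simp [h, h.ne, h.ne', not_lt_of_gt h]

section CharTwo

variable {n R : Type*} [Fintype n] [CommRing R] [CharP R 2]

theorem det_eq_permanent_of_charTwo [DecidableEq n] (M : Matrix n n R) :
    M.det = M.permanent := by
  rw [det_apply, permanent]
  refine sum_congr rfl fun σ _ => ?_
  rcases Int.units_eq_one_or (Perm.sign σ) with h | h <;> simp [h, CharTwo.neg_eq]

theorem IsSymm.permanent_eq_sum_involutions [DecidableEq n] {M : Matrix n n R}
    (hM : M.IsSymm) :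
    M.permanent = ∑ σ ∈ univ.filter (fun σ : Perm n => σ⁻¹ = σ), ∏ i, M (σ i) i := by
  rw [permanent, ← sum_filter_add_sum_filter_not univ (fun σ : Perm n => σ⁻¹ = σ), add_eq_left]
  refine sum_involution (fun σ _ => σ⁻¹) (fun σ _ => ?_) (fun σ hσ _ => ?_) (fun σ hσ => ?_)
    (fun σ _ => inv_inv σ)
  · rw [hM.prod_perm_inv_eq, CharTwo.add_self_eq_zero]
  · exact (mem_filter.mp hσ).2
  · simpa [eq_comm] using hσ

end CharTwo

section Matching

variable {n R : Type*} [Fintype n] [LinearOrder n] [CommRing R]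

/-- The involutions `σ` of `n` are the partial matchings `{i, σ i}` of `n`; an unmatched point `i`
is weighted by `d i` and a matched pair `i < j` by `M i j`. -/
def matchingSum (d : n → R) (M : Matrix n n R) : R :=
  ∑ σ ∈ univ.filter (fun σ : Perm n => σ⁻¹ = σ),
    (∏ i ∈ univ.filter (fun i => σ i = i), d i) * ∏ i ∈ univ.filter (fun i => i < σ i), M i (σ i)

theorem matchingSum_mem {S : Type*} [SetLike S R] [SubsemiringClass S R] (s : S) {d : n → R}
    {M : Matrix n n R} (hd : ∀ i, d i ∈ s) (hM : ∀ i j, i < j → M i j ∈ s) :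
    matchingSum d M ∈ s :=
  sum_mem fun _ _ =>
    mul_mem (prod_mem fun i _ => hd i) (prod_mem fun _ hi => hM _ _ (mem_filter.mp hi).2)

theorem det_eq_matchingSum_sq [CharP R 2] {d : n → R} {M : Matrix n n R} (hM : M.IsSymm)
    (hd : ∀ i, M i i = d i ^ 2) : M.det = matchingSum d M ^ 2 := by
  rw [det_eq_permanent_of_charTwo, hM.permanent_eq_sum_involutions, matchingSum, CharTwo.sum_sq]
  refine sum_congr rfl fun σ hσ => ?_
  rw [hM.prod_involution_eq (mem_filter.mp hσ).2, mul_pow]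
  simp only [hd, prod_pow]

end Matching

end Matrix

theorem stmt5_general {F : Type*} [Field F] (hchar : CharP F 2) (m n : ℕ)
    (f : Fin m → Fin m → MvPolynomial (Fin n) F) :
    ∃ g ∈ Algebra.adjoin F {x : MvPolynomial (Fin n) F | ∃ i j : Fin m, i ≤ j ∧ x = f i j},
      (Matrix.of fun i j : Fin m =>
        if i = j then f i i ^ 2 else if i < j then f i j else f j i).det = g ^ 2 := by
  have := hchar
  refine ⟨matchingSum (fun i => f i i) _,
    matchingSum_mem _ (fun i => Algebra.subset_adjoin ⟨i, i, le_rfl, rfl⟩) fun i j hij => ?_,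
    det_eq_matchingSum_sq (isSymm_of_ite_lt _ _) fun i => by simp⟩
  rw [of_apply, if_neg hij.ne, if_pos hij]
  exact Algebra.subset_adjoin ⟨i, j, hij.le, rfl⟩

/-- Over a finite field of characteristic two, the determinant of the symmetric `m × m`
matrix with diagonal entries `f_{ii}²` and off-diagonal entries `f_{ij}` (where the
`f_{ij}` are polynomials in `F_q[X_1,…,X_n]`) is the square of an element of the subring
generated over `F_q` by the `f_{ij}`. -/
theorem stmt5 {F : Type*} [Field F] [Fintype F] (hchar : CharP F 2) (m n : ℕ)
    (f : Fin m → Fin m → MvPolynomial (Fin n) F) :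
    ∃ g ∈ Algebra.adjoin F {x : MvPolynomial (Fin n) F | ∃ i j : Fin m, i ≤ j ∧ x = f i j},
      (Matrix.of fun i j : Fin m =>
        if i = j then f i i ^ 2 else if i < j then f i j else f j i).det = g ^ 2 :=
  stmt5_general hchar m n f
end

section
/- In a commutative ring of characteristic 2, the determinant of a symmetric matrix with zero diagonal (which is then alternating) of odd size is zero. -/
open Matrix Equiv

theorem Matrix.IsSymm.prod_perm_inv_apply {ι R : Type*} [Fintype ι] [CommMonoid R]
    {A : Matrix ι ι R} (hA : A.IsSymm) (σ : Perm ι) :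
    ∏ i, A (σ⁻¹ i) i = ∏ i, A (σ i) i := by
  rw [← Equiv.prod_comp σ (fun i => A (σ⁻¹ i) i)]
  simp only [Perm.coe_inv, symm_apply_apply, hA.apply]

/-- Pairing `σ` with `σ⁻¹` makes the terms of the Leibniz formula cancel in characteristic `2`;
the self-paired `σ` are involutions, which on a set of odd size fix a point and so pick up a
diagonal entry. -/
theorem Matrix.det_eq_zero_of_isSymm_of_diag_eq_zero_of_odd_card {ι R : Type*} [Fintype ι]
    [DecidableEq ι] [CommRing R] (h2 : (2 : R) = 0) (hι : Odd (Fintype.card ι))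
    {A : Matrix ι ι R} (hA : A.IsSymm) (hd : ∀ i, A i i = 0) : A.det = 0 := by
  rw [det_apply]
  refine Finset.sum_ninvolution (·⁻¹) (fun σ => ?_) (fun σ hσ => ?_) (fun _ => Finset.mem_univ _)
    inv_inv
  · rw [Perm.sign_inv, hA.prod_perm_inv_apply, ← two_smul R, h2, zero_smul]
  · contrapose! hσ
    have hσ2 : σ ^ 2 ^ 1 = 1 := by rw [pow_one, sq]; exact inv_eq_iff_mul_eq_one.mp hσ
    obtain ⟨i, hi⟩ := Perm.exists_fixed_point_of_prime hι.not_two_dvd_nat hσ2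
    rw [Finset.prod_eq_zero (Finset.mem_univ i) (by rw [hi, hd]), smul_zero]

/-- In a commutative ring of characteristic `2`, the determinant of a symmetric matrix with
zero diagonal (hence alternating) of odd size is zero. -/
theorem stmt6 {R : Type*} [CommRing R] (h2 : (2 : R) = 0) (n : ℕ) (hn : Odd n)
    (A : Matrix (Fin n) (Fin n) R) (hs : Aᵀ = A) (hd : ∀ i, A i i = 0) :
    A.det = 0 :=
  det_eq_zero_of_isSymm_of_diag_eq_zero_of_odd_card h2 (by rwa [Fintype.card_fin]) hs hd
end

section
/- Let F_q have characteristic 2, n = 2ν+2, S = S_{2ν+2}, and K = det of the (n-1)×(n-1) matrix with (i,j) entry P_{n,|i-j|}^{q^{min(i,j)-1}}. Then the specialization of K at X_{n-1} = X_n equals the square of the Moore determinant det(X_j^{q^{i-1}})_{1≤i,j≤n-1} in the variables X_1,...,X_{n-1}; in particular K ≠ 0. -/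
/-!
Substituting `X_{2ν} := X_{2ν+1} =: L` merges the last two coordinates. The hyperbolic pair
`(2ν, 2ν+1)` and the diagonal entry of `S` at `(2ν+1, 2ν+1)` then contribute `L · L^{q^k}` three
times, i.e. once in characteristic two, so `P_k` becomes `∑ₐ Yₐ · Y_{σ a}^{q^k}` in the `2ν + 1`
variables `Y = (X_0, …, X_{2ν-1}, X_{2ν+1})`, where `σ` swaps `a` and `a + ν` and fixes `2ν`.
As `x ↦ x^q` is a ring endomorphism, `P_k^{q^m} = ∑ₐ Yₐ^{q^m} Y_{σ a}^{q^{k+m}}`, so the specialised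
matrix is `V (V σ)ᵀ` for the Moore matrix `V = (Yₐ^{q^i})` with columns permuted by `σ`, and its
determinant is `sign σ · (det V)² = (det V)²`. The Moore determinant of distinct variables is
nonzero: its permutation expansion is a sum of distinct monomials.
-/

open Matrix MvPolynomial

theorem det_X_pow_pow_ne_zero {R σ : Type*} [CommRing R] [Nontrivial R] {m q : ℕ}
    (hq : 1 < q) {e : Fin m → σ} (he : Function.Injective e) :
    (Matrix.of fun i j : Fin m => (X (e j) : MvPolynomial σ R) ^ q ^ (i : ℕ)).det ≠ 0 := by
  classical
  let d : Equiv.Perm (Fin m) → σ →₀ ℕ := fun π => ∑ j, Finsupp.single (e j) (q ^ (π j : ℕ))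
  have hd : ∀ π j, d π (e j) = q ^ (π j : ℕ) := fun π j => by
    simp [d, Finsupp.finsetSum_apply, Finsupp.single_apply, he.eq_iff]
  have hd_inj : Function.Injective d := fun π ρ h => Equiv.ext fun j =>
    Fin.ext (Nat.pow_right_injective hq (show q ^ (π j : ℕ) = q ^ (ρ j : ℕ) by rw [← hd, ← hd, h]))
  have hterm : ∀ π : Equiv.Perm (Fin m),
      ∏ i, (Matrix.of fun i j : Fin m => (X (e j) : MvPolynomial σ R) ^ q ^ (i : ℕ)) (π i) i
        = monomial (d π) 1 := fun π => by
    simp [d, monomial_sum_one, X_pow_eq_monomial]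
  intro h
  have hcoeff := congrArg (coeff (d 1)) h
  rw [det_apply, coeff_sum, Finset.sum_eq_single 1] at hcoeff
  · rw [hterm, coeff_smul, coeff_monomial, if_pos rfl] at hcoeff
    simp at hcoeff
  · intro π _ hπ
    rw [hterm, coeff_smul, coeff_monomial, if_neg (hd_inj.ne hπ), smul_zero]
  · simp

theorem CharTwo.intCast_units_eq_one {R : Type*} [Ring R] [CharP R 2] (u : ℤˣ) :
    ((u : ℤ) : R) = 1 := by
  rcases Int.units_eq_one_or u with rfl | rfl <;> simp [CharTwo.neg_eq]

theorem FiniteField.frobeniusAlgHom_pow_apply (K : Type*) {R : Type*} [Field K] [Fintype K]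
    [CommRing R] [Algebra K R] (k : ℕ) (x : R) :
    ((frobeniusAlgHom K R : R →+* R) ^ k) x = x ^ Fintype.card K ^ k := by
  rw [RingHom.coe_pow]
  exact congrFun (pow_iterate _ k) x

section IteratePairing

variable {R : Type*} [CommRing R] (φ : R →+* R) {m : ℕ} (σ : Fin m → Fin m) (Y : Fin m → R)

theorem pow_apply_sum_mul_pow_apply (k l : ℕ) :
    (φ ^ l) (∑ a, Y a * (φ ^ k) (Y (σ a))) = ∑ a, (φ ^ l) (Y a) * (φ ^ (k + l)) (Y (σ a)) := by
  have hcomp : ∀ x, (φ ^ l) ((φ ^ k) x) = (φ ^ (k + l)) x := fun x => by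
    rw [add_comm, pow_add]; rfl
  simp only [map_sum, map_mul, hcomp]

variable {σ}

theorem sum_pow_apply_mul_pow_apply_comm (hσ : Function.Involutive σ) (i j : ℕ) :
    ∑ a, (φ ^ i) (Y a) * (φ ^ j) (Y (σ a)) = ∑ a, (φ ^ j) (Y a) * (φ ^ i) (Y (σ a)) :=
  Fintype.sum_equiv hσ.toPerm _ _ fun a => by
    rw [Function.Involutive.coe_toPerm, hσ a, mul_comm]

theorem det_pow_apply_pairing (hσ : Function.Involutive σ) :
    (Matrix.of fun i j : Fin m =>
        if (i : ℕ) ≤ j then (φ ^ (i : ℕ)) (∑ a, Y a * (φ ^ ((j : ℕ) - i)) (Y (σ a)))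
        else (φ ^ (j : ℕ)) (∑ a, Y a * (φ ^ ((i : ℕ) - j)) (Y (σ a)))).det
      = Equiv.Perm.sign hσ.toPerm
          * (Matrix.of fun (i a : Fin m) => (φ ^ (i : ℕ)) (Y a)).det ^ 2 := by
  set V := Matrix.of fun (i a : Fin m) => (φ ^ (i : ℕ)) (Y a)
  have hM : (Matrix.of fun i j : Fin m =>
        if (i : ℕ) ≤ j then (φ ^ (i : ℕ)) (∑ a, Y a * (φ ^ ((j : ℕ) - i)) (Y (σ a)))
        else (φ ^ (j : ℕ)) (∑ a, Y a * (φ ^ ((i : ℕ) - j)) (Y (σ a))))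
      = V * (V.submatrix id hσ.toPerm)ᵀ := by
    ext i j
    simp only [of_apply, mul_apply, transpose_apply, submatrix_apply, id, V,
      Function.Involutive.coe_toPerm]
    split_ifs with hij
    · rw [pow_apply_sum_mul_pow_apply, Nat.sub_add_cancel hij]
    · rw [pow_apply_sum_mul_pow_apply, Nat.sub_add_cancel (by omega),
        sum_pow_apply_mul_pow_apply_comm φ Y hσ]
  rw [hM, det_mul, det_transpose, det_permute']
  ring

theorem det_pow_apply_pairing_of_charTwo [CharP R 2] (hσ : Function.Involutive σ) :
    (Matrix.of fun i j : Fin m =>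
        if (i : ℕ) ≤ j then (φ ^ (i : ℕ)) (∑ a, Y a * (φ ^ ((j : ℕ) - i)) (Y (σ a)))
        else (φ ^ (j : ℕ)) (∑ a, Y a * (φ ^ ((i : ℕ) - j)) (Y (σ a)))).det
      = (Matrix.of fun (i a : Fin m) => (φ ^ (i : ℕ)) (Y a)).det ^ 2 := by
  rw [det_pow_apply_pairing φ Y hσ, CharTwo.intCast_units_eq_one, one_mul]

end IteratePairing

def orthogonalFormMatrix (ν : ℕ) (R : Type*) [Zero R] [One R] :
    Matrix (Fin (2 * ν + 2)) (Fin (2 * ν + 2)) R :=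
  Matrix.of fun i j =>
    if (i : ℕ) < ν ∧ (j : ℕ) = (i : ℕ) + ν then 1
    else if (j : ℕ) < ν ∧ (i : ℕ) = (j : ℕ) + ν then 1
    else if (i : ℕ) = 2 * ν ∧ (j : ℕ) = 2 * ν + 1 then 1
    else if (i : ℕ) = 2 * ν + 1 ∧ (j : ℕ) = 2 * ν then 1
    else if (i : ℕ) = 2 * ν + 1 ∧ (j : ℕ) = 2 * ν + 1 then 1
    else 0

def formPartner (ν : ℕ) (i : Fin (2 * ν + 2)) : Fin (2 * ν + 2) :=
  ⟨if (i : ℕ) < ν then i + ν else if (i : ℕ) < 2 * ν then i - ν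
    else if (i : ℕ) = 2 * ν then 2 * ν + 1 else 2 * ν, by split_ifs <;> omega⟩

def swapHalves (ν : ℕ) (a : Fin (2 * ν + 1)) : Fin (2 * ν + 1) :=
  ⟨if (a : ℕ) < ν then a + ν else if (a : ℕ) < 2 * ν then a - ν else a, by split_ifs <;> omega⟩

theorem swapHalves_involutive (ν : ℕ) : Function.Involutive (swapHalves ν) := fun a =>
  Fin.ext <| by simp only [swapHalves]; split_ifs <;> omega

theorem swapHalves_last (ν : ℕ) : swapHalves ν (Fin.last (2 * ν)) = Fin.last (2 * ν) :=
  Fin.ext <| by simp only [swapHalves, Fin.val_last]; split_ifs <;> omega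

theorem orthogonalFormMatrix_apply (ν : ℕ) {R : Type*} [AddMonoidWithOne R]
    (i j : Fin (2 * ν + 2)) :
    orthogonalFormMatrix ν R i j = (if j = formPartner ν i then 1 else 0)
      + if i = Fin.last _ ∧ j = Fin.last _ then 1 else 0 := by
  have hi := i.isLt
  have hj := j.isLt
  simp only [orthogonalFormMatrix, formPartner, of_apply, Fin.ext_iff, Fin.val_last]
  split_ifs <;> first | (exfalso; omega) | simp

theorem map_orthogonalFormMatrix_apply (ν : ℕ) {R S : Type*} [Semiring R] [Semiring S]
    (f : R →+* S) (i j : Fin (2 * ν + 2)) :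
    f (orthogonalFormMatrix ν R i j) = orthogonalFormMatrix ν S i j := by
  simp only [orthogonalFormMatrix_apply, map_add, apply_ite f, map_one, map_zero]

theorem val_predAbove_last {n : ℕ} (i : Fin (n + 2)) :
    (Fin.predAbove (Fin.last n) i : ℕ) = min (i : ℕ) n := by
  rw [Fin.predAbove_last_apply]
  split_ifs with h
  · simp [h]
  · have : (i : ℕ) ≠ n + 1 := fun h' => h (Fin.ext h')
    simp only [Fin.coe_castPred]
    omega

theorem succAbove_castSucc_last_eq_ite {n : ℕ} (j : Fin (n + 1)) :
    (Fin.last n).castSucc.succAbove j = if (j : ℕ) = n then Fin.last (n + 1) else j.castSucc := by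
  rcases Fin.eq_castSucc_or_eq_last j with ⟨j, rfl⟩ | rfl
  · simp [j.isLt.ne, Fin.succAbove_of_castSucc_lt, Fin.castSucc_lt_castSucc_iff]
  · simp

theorem succAbove_castSucc_last_predAbove_last {n : ℕ} (i : Fin (n + 2)) :
    (Fin.last n).castSucc.succAbove ((Fin.last n).predAbove i)
      = if (i : ℕ) = n then Fin.last (n + 1) else i := by
  have hi := i.isLt
  rw [succAbove_castSucc_last_eq_ite]
  split_ifs <;> ext <;> simp only [Fin.val_castSucc, val_predAbove_last, Fin.val_last] at * <;>
    omega

theorem predAbove_last_formPartner (ν : ℕ) (i : Fin (2 * ν + 2)) :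
    Fin.predAbove (Fin.last _) (formPartner ν i) = swapHalves ν (Fin.predAbove (Fin.last _) i) := by
  have hi := i.isLt
  apply Fin.ext
  simp only [val_predAbove_last, formPartner, swapHalves]
  split_ifs <;> omega

theorem sum_predAbove_last {M : Type*} [AddCommMonoid M] {n : ℕ} (f : Fin (n + 1) → M) :
    ∑ i : Fin (n + 2), f (Fin.predAbove (Fin.last n) i) = ∑ a, f a + f (Fin.last n) := by
  simp [Fin.sum_univ_castSucc (n := n + 1)]

theorem sum_orthogonalFormMatrix_mul_predAbove {A : Type*} [CommRing A] [CharP A 2] (ν : ℕ)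
    (u w : Fin (2 * ν + 1) → A) :
    ∑ i, ∑ j, orthogonalFormMatrix ν A i j * u (Fin.predAbove (Fin.last _) i)
        * w (Fin.predAbove (Fin.last _) j)
      = ∑ a, u a * w (swapHalves ν a) := by
  simp only [orthogonalFormMatrix_apply, add_mul, ite_mul, one_mul, zero_mul,
    Finset.sum_add_distrib, Finset.sum_ite_eq', Finset.mem_univ, if_true, ite_and,
    Finset.sum_ite_irrel, Finset.sum_const_zero]
  rw [Finset.sum_congr rfl fun i _ => by rw [predAbove_last_formPartner],
    sum_predAbove_last (fun a => u a * w (swapHalves ν a)), swapHalves_last,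
    Fin.predAbove_last_apply, dif_pos rfl, add_assoc, CharTwo.add_self_eq_zero, add_zero]

theorem aeval_sum_orthogonalFormMatrix {F A : Type*} [CommSemiring F] [CommRing A] [CharP A 2]
    [Algebra F A] (ν Q : ℕ) (Y : Fin (2 * ν + 1) → A) :
    aeval (fun i => Y (Fin.predAbove (Fin.last _) i))
        (∑ i, ∑ j, C (orthogonalFormMatrix ν F i j) * X i * X j ^ Q)
      = ∑ a, Y a * Y (swapHalves ν a) ^ Q := by
  simp only [map_sum, map_mul, map_pow, aeval_C, aeval_X]
  simp only [map_orthogonalFormMatrix_apply]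
  exact sum_orthogonalFormMatrix_mul_predAbove ν Y fun a => Y a ^ Q

/-- Let `F_q` have characteristic two, `n = 2ν + 2`, `S = S_{2ν+2}`,
`P_{nk} = X S (X^{q^k})ᵗ`, and `K` the determinant of the `(n-1) × (n-1)` matrix with
`(i,j)` entry `P_{n,|i-j|}^{q^{min(i,j)-1}}`.  The specialization of `K` at
`X_{n-1} = X_n` equals the square of the Moore determinant of `X_1, …, X_{n-2}, X_n`;
in particular `K ≠ 0`. -/
theorem stmt15 {F : Type*} [Field F] [Fintype F] (hchar : CharP F 2) (ν : ℕ)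
    (S : Matrix (Fin (2 * ν + 2)) (Fin (2 * ν + 2)) F)
    (hS : S = Matrix.of fun i j : Fin (2 * ν + 2) =>
        if (i : ℕ) < ν ∧ (j : ℕ) = (i : ℕ) + ν then (1 : F)
        else if (j : ℕ) < ν ∧ (i : ℕ) = (j : ℕ) + ν then 1
        else if (i : ℕ) = 2 * ν ∧ (j : ℕ) = 2 * ν + 1 then 1
        else if (i : ℕ) = 2 * ν + 1 ∧ (j : ℕ) = 2 * ν then 1
        else if (i : ℕ) = 2 * ν + 1 ∧ (j : ℕ) = 2 * ν + 1 then 1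
        else 0)
    (P : ℕ → MvPolynomial (Fin (2 * ν + 2)) F)
    (hP : ∀ k, P k = ∑ i : Fin (2 * ν + 2), ∑ j : Fin (2 * ν + 2),
        C (S i j) * X i * X j ^ Fintype.card F ^ k)
    (K : MvPolynomial (Fin (2 * ν + 2)) F)
    (hK : K = (Matrix.of fun i j : Fin (2 * ν + 1) =>
        if (i : ℕ) ≤ (j : ℕ) then P ((j : ℕ) - (i : ℕ)) ^ Fintype.card F ^ (i : ℕ)
        else P ((i : ℕ) - (j : ℕ)) ^ Fintype.card F ^ (j : ℕ)).det) :
    aeval (fun i : Fin (2 * ν + 2) =>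
        if (i : ℕ) = 2 * ν then X (Fin.last (2 * ν + 1)) else (X i : MvPolynomial (Fin (2 * ν + 2)) F)) K
      = (Matrix.of fun i j : Fin (2 * ν + 1) =>
          (if (j : ℕ) = 2 * ν then X (Fin.last (2 * ν + 1))
           else (X (Fin.castSucc j) : MvPolynomial (Fin (2 * ν + 2)) F)) ^
            Fintype.card F ^ (i : ℕ)).det ^ 2
    ∧ K ≠ 0 := by
  let Y : Fin (2 * ν + 1) → MvPolynomial (Fin (2 * ν + 2)) F :=
    fun a => X ((Fin.last (2 * ν)).castSucc.succAbove a)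
  let φ := (FiniteField.frobeniusAlgHom F (MvPolynomial (Fin (2 * ν + 2)) F) :
    MvPolynomial (Fin (2 * ν + 2)) F →+* MvPolynomial (Fin (2 * ν + 2)) F)
  have hφ := FiniteField.frobeniusAlgHom_pow_apply F (R := MvPolynomial (Fin (2 * ν + 2)) F)
  have hg : (fun i : Fin (2 * ν + 2) => if (i : ℕ) = 2 * ν then X (Fin.last (2 * ν + 1))
      else (X i : MvPolynomial (Fin (2 * ν + 2)) F)) = fun i => Y (Fin.predAbove (Fin.last _) i) :=
    funext fun i => by simp only [Y, succAbove_castSucc_last_predAbove_last, apply_ite X]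
  have hV : (Matrix.of fun (i a : Fin (2 * ν + 1)) => (φ ^ (i : ℕ)) (Y a))
      = Matrix.of fun i j : Fin (2 * ν + 1) =>
          (if (j : ℕ) = 2 * ν then X (Fin.last (2 * ν + 1))
           else (X (Fin.castSucc j) : MvPolynomial (Fin (2 * ν + 2)) F)) ^
            Fintype.card F ^ (i : ℕ) := by
    ext i j
    simp only [of_apply, φ, hφ, Y, succAbove_castSucc_last_eq_ite, apply_ite X]
  have hPY : ∀ k, aeval (fun i => Y (Fin.predAbove (Fin.last _) i)) (P k)
      = ∑ a, Y a * (φ ^ k) (Y (swapHalves ν a)) := fun k => by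
    rw [hP, show S = orthogonalFormMatrix ν F from hS, aeval_sum_orthogonalFormMatrix]
    simp only [φ, hφ]
  have hdet : aeval (fun i => Y (Fin.predAbove (Fin.last _) i)) K
      = (Matrix.of fun (i a : Fin (2 * ν + 1)) => (φ ^ (i : ℕ)) (Y a)).det ^ 2 := by
    rw [hK, AlgHom.map_det, AlgHom.mapMatrix_apply,
      ← det_pow_apply_pairing_of_charTwo φ Y (swapHalves_involutive ν)]
    congr 1
    ext i j : 1
    simp only [map_apply, of_apply, apply_ite (aeval _), map_pow, hPY, φ, hφ]
  have hMoore : (Matrix.of fun (i a : Fin (2 * ν + 1)) => (φ ^ (i : ℕ)) (Y a)).det ≠ 0 := by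
    simp only [φ, hφ, Y]
    exact det_X_pow_pow_ne_zero Fintype.one_lt_card Fin.succAbove_right_injective
  rw [hg, ← hV]
  refine ⟨hdet, fun hK0 => hMoore ?_⟩
  rw [hK0, map_zero] at hdet
  exact (pow_eq_zero_iff two_ne_zero).mp hdet.symm
end
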